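/- Let V be a variety with a term t(x,y,z) whose interpretation in every simple member of V is the discriminator operation, and suppose every quasi-identity is, in V, equivalent to a formula of the form (∀x̄) s(x̄)≐t(x̄) ∨ (∀x̄) u(x̄)≇v(x̄). If V is a minimal variety and some nontrivial algebra A in V satisfies a quasi-identity q, and A is a Boolean product of simple and trivial algebras, then V ⊨ q. -/
import Mathlib


open FirstOrder Language

universe u

/-- A quasi-identity `∀ x̄ [⋀ i, lhs i ≐ rhs i → cl ≐ cr]` in `k` variables with `n` premises. -/
structure QuasiId (L : FirstOrder.Language.{u, u}) where
  k : ℕ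
  n : ℕ
  lhs : Fin n → L.Term (Fin k)
  rhs : Fin n → L.Term (Fin k)
  cl : L.Term (Fin k)
  cr : L.Term (Fin k)

variable {L : FirstOrder.Language.{u, u}}

/-- Satisfaction of a quasi-identity in an algebra. -/
def QuasiId.Holds (q : QuasiId L) (M : Type u) [L.Structure M] : Prop :=
  ∀ x : Fin q.k → M,
    (∀ i, (q.lhs i).realize x = (q.rhs i).realize x) →
      q.cl.realize x = q.cr.realize x

/-- Satisfiability of the premise of a quasi-identity in an algebra. -/
def QuasiId.PremiseSat (q : QuasiId L) (M : Type u) [L.Structure M] : Prop :=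
  ∃ x : Fin q.k → M, ∀ i, (q.lhs i).realize x = (q.rhs i).realize x

/-- An identity `∀ x̄, lhs ≐ rhs`. -/
structure EqId (L : FirstOrder.Language.{u, u}) where
  k : ℕ
  lhs : L.Term (Fin k)
  rhs : L.Term (Fin k)

def EqId.Holds (e : EqId L) (M : Type u) [L.Structure M] : Prop :=
  ∀ x : Fin e.k → M, e.lhs.realize x = e.rhs.realize x

/-- A quasivariety: a class of algebras axiomatized by a set of quasi-identities. -/
def IsQuasivariety (Q : ∀ M : Type u, L.Structure M → Prop) : Prop :=
  ∃ S : Set (QuasiId L), ∀ (M : Type u) (iM : L.Structure M),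
    Q M iM ↔ ∀ q ∈ S, @QuasiId.Holds L q M iM

/-- A variety: a class of algebras axiomatized by a set of identities. -/
def IsVariety (V : ∀ M : Type u, L.Structure M → Prop) : Prop :=
  ∃ S : Set (EqId L), ∀ (M : Type u) (iM : L.Structure M),
    V M iM ↔ ∀ e ∈ S, @EqId.Holds L e M iM

/-- `F` is free for the class `Q` over the denumerable set of free generators `g 0, g 1, …`. -/
def IsFreeAlgOn (Q : ∀ M : Type u, L.Structure M → Prop)
    (F : Type u) [iF : L.Structure F] (g : ℕ → F) : Prop :=
  Q F iF ∧ Function.Injective g ∧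
    ∀ (A : Type u) (iA : L.Structure A), Q A iA → ∀ f : ℕ → A,
      ∃! h : @Language.Hom L F A iF iA, ∀ m, h.toFun (g m) = f m

/-- Structural completeness: every quasi-identity true in the free algebra `F` holds in `Q`. -/
def IsSC (Q : ∀ M : Type u, L.Structure M → Prop) (F : Type u) [L.Structure F] : Prop :=
  ∀ q : QuasiId L, q.Holds F →
    ∀ (M : Type u) (iM : L.Structure M), Q M iM → @QuasiId.Holds L q M iM

/-- Almost structural completeness: every active (premise satisfiable in `F`) quasi-identity
true in the free algebra `F` holds in `Q`. -/
def IsASC (Q : ∀ M : Type u, L.Structure M → Prop) (F : Type u) [L.Structure F] : Prop :=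
  ∀ q : QuasiId L, q.Holds F → q.PremiseSat F →
    ∀ (M : Type u) (iM : L.Structure M), Q M iM → @QuasiId.Holds L q M iM

/-- An idempotent element: forms a one-element subalgebra. -/
def IsIdemElem (M : Type u) [L.Structure M] (e : M) : Prop :=
  ∀ (m : ℕ) (f : L.Functions m), Structure.funMap f (fun _ : Fin m => e) = e

/-- Some elementary extension of `F` contains an idempotent element. -/
def HasIdemElemExtension (F : Type u) [iF : L.Structure F] : Prop :=
  ∃ (G : Type u) (iG : L.Structure G),
    Nonempty (@Language.ElementaryEmbedding L F G iF iG) ∧ ∃ e : G, @IsIdemElem L G iG e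

/-- `r` is a `Q`-congruence of `S`: the kernel of a homomorphism into a member of `Q`
(equivalently, a congruence with quotient in `Q`). -/
def IsQCong (Q : ∀ M : Type u, L.Structure M → Prop) (S : Type u) [iS : L.Structure S]
    (r : S → S → Prop) : Prop :=
  ∃ (A : Type u) (iA : L.Structure A), Q A iA ∧
    ∃ h : @Language.Hom L S A iS iA, ∀ a b, r a b ↔ h.toFun a = h.toFun b

/-- `S` is `Q`-simple: nontrivial, in `Q`, and its only `Q`-congruences are equality and the
total relation. -/
def IsQSimple (Q : ∀ M : Type u, L.Structure M → Prop) (S : Type u) [iS : L.Structure S] : Prop :=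
  Nontrivial S ∧ Q S iS ∧
    ∀ r : S → S → Prop, IsQCong Q S r → (∀ a b, r a b ↔ a = b) ∨ (∀ a b, r a b)

/-- `S` is `Q`-subdirectly irreducible: equality is completely meet-irreducible among the
`Q`-congruences of `S`. -/
def IsQSubdirectlyIrreducible (Q : ∀ M : Type u, L.Structure M → Prop)
    (S : Type u) [iS : L.Structure S] : Prop :=
  Nontrivial S ∧ Q S iS ∧
    ∀ (ι : Type u) (R : ι → S → S → Prop), (∀ i, IsQCong Q S (R i)) →
      (∀ a b, ((∀ i, R i a b) ↔ a = b)) → ∃ i, ∀ a b, R i a b ↔ a = b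

/-- `Q` is semisimple: all `Q`-subdirectly irreducible algebras are `Q`-simple. -/
def IsSemisimple (Q : ∀ M : Type u, L.Structure M → Prop) : Prop :=
  ∀ (S : Type u) (iS : L.Structure S),
    @IsQSubdirectlyIrreducible L Q S iS → @IsQSimple L Q S iS

def SubclassOf (Q' Q : ∀ M : Type u, L.Structure M → Prop) : Prop :=
  ∀ (M : Type u) (iM : L.Structure M), Q' M iM → Q M iM

/-- A minimal quasivariety: nontrivial, and every subquasivariety is trivial or the whole class. -/
def IsMinimalQuasivariety (Q : ∀ M : Type u, L.Structure M → Prop) : Prop :=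
  (∃ (M : Type u) (iM : L.Structure M), Q M iM ∧ Nontrivial M) ∧
    ∀ Q' : ∀ M : Type u, L.Structure M → Prop, IsQuasivariety Q' → SubclassOf Q' Q →
      (∀ (M : Type u) (iM : L.Structure M), Q' M iM → Subsingleton M) ∨
        (∀ (M : Type u) (iM : L.Structure M), Q M iM ↔ Q' M iM)

/-- A minimal variety: nontrivial, and every subvariety is trivial or the whole class. -/
def IsMinimalVariety (V : ∀ M : Type u, L.Structure M → Prop) : Prop :=
  (∃ (M : Type u) (iM : L.Structure M), V M iM ∧ Nontrivial M) ∧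
    ∀ V' : ∀ M : Type u, L.Structure M → Prop, IsVariety V' → SubclassOf V' V →
      (∀ (M : Type u) (iM : L.Structure M), V' M iM → Subsingleton M) ∨
        (∀ (M : Type u) (iM : L.Structure M), V M iM ↔ V' M iM)

/-- `t` interprets as the discriminator operation on `M`. -/
def IsDiscrTermOn (t : L.Term (Fin 3)) (M : Type u) [L.Structure M] : Prop :=
  ∀ a b c : M, (a ≠ b → t.realize ![a, b, c] = a) ∧ (a = b → t.realize ![a, b, c] = c)

/-- `V` is the variety generated by the class `K`. -/
def IsVarietyGeneratedBy (V K : ∀ M : Type u, L.Structure M → Prop) : Prop :=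
  IsVariety V ∧ SubclassOf K V ∧ ∀ W, IsVariety W → SubclassOf K W → SubclassOf V W

/-- A discriminator variety: generated by a class of algebras with a common discriminator term. -/
def IsDiscriminatorVariety (V : ∀ M : Type u, L.Structure M → Prop) : Prop :=
  ∃ (K : ∀ M : Type u, L.Structure M → Prop) (t : L.Term (Fin 3)),
    (∀ (M : Type u) (iM : L.Structure M), K M iM → @IsDiscrTermOn L t M iM) ∧
      IsVarietyGeneratedBy V K

/-- A congruence of an algebra. -/
def IsCongruence (M : Type u) [L.Structure M] (r : M → M → Prop) : Prop :=
  Equivalence r ∧ ∀ (m : ℕ) (f : L.Functions m) (a b : Fin m → M),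
    (∀ i, r (a i) (b i)) → r (Structure.funMap f a) (Structure.funMap f b)

/-- A simple algebra: nontrivial with only trivial congruences. -/
def IsSimpleAlg (M : Type u) [L.Structure M] : Prop :=
  Nontrivial M ∧ ∀ r : M → M → Prop, IsCongruence (L := L) M r →
    (∀ a b, r a b ↔ a = b) ∨ (∀ a b, r a b)

/-- `P` is `Q`-finitely presented: presented in `Q` by finitely many generators `v` and
finitely many relations `lhs i ≐ rhs i`. -/
def IsQFinPresented (Q : ∀ M : Type u, L.Structure M → Prop)
    (P : Type u) [iP : L.Structure P] : Prop :=
  Q P iP ∧ ∃ (k n : ℕ) (lhs rhs : Fin n → L.Term (Fin k)) (v : Fin k → P),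
    (∀ i, (lhs i).realize v = (rhs i).realize v) ∧
    ∀ (A : Type u) (iA : L.Structure A), Q A iA → ∀ x : Fin k → A,
      (∀ i, @Term.realize L A iA (Fin k) x (lhs i) = @Term.realize L A iA (Fin k) x (rhs i)) →
        ∃! h : @Language.Hom L P A iP iA, ∀ j, h.toFun (v j) = x j

/-- The coordinatewise structure on a direct product of algebras. -/
def piStruct {ι : Type u} {M : ι → Type u} (iM : ∀ i, L.Structure (M i)) :
    L.Structure (∀ i, M i) where
  funMap := fun {m} f x i => @Structure.funMap L (M i) (iM i) m f (fun j => x j i)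
  RelMap := fun {m} r x => ∀ i, @Structure.RelMap L (M i) (iM i) m r (fun j => x j i)

instance piStructure {ι : Type u} {M : ι → Type u} [∀ i, L.Structure (M i)] :
    L.Structure (∀ i, M i) :=
  piStruct fun i => inferInstance

section AuxLemmas

/-- Term realization in a direct product is computed coordinatewise. -/
lemma realize_pi {ι : Type u} {M : ι → Type u} (iM : ∀ i, L.Structure (M i))
    {α : Type*} (a : α → ∀ i, M i) (u : L.Term α) (x : ι) :
    (@Term.realize L _ (piStruct iM) _ a u) x
      = @Term.realize L _ (iM x) _ (fun j => a j x) u := by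
  induction u with
  | var _ => rfl
  | func f ts ih =>
      show @Structure.funMap L _ (iM x) _ f
          (fun j => (@Term.realize L _ (piStruct iM) _ a (ts j)) x) = _
      simp only [ih]
      rfl

/-- In a minimal variety, an identity holding in some nontrivial member holds everywhere. -/
lemma eqid_transfer (V : ∀ M : Type u, L.Structure M → Prop) (hV : IsVariety V)
    (hmin : IsMinimalVariety V) (e : EqId L)
    (N : Type u) (iN : L.Structure N) (hN : V N iN) (hNnt : Nontrivial N)
    (hNe : @EqId.Holds L e N iN) :
    ∀ (M : Type u) (iM : L.Structure M), V M iM → @EqId.Holds L e M iM := by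
  obtain ⟨S, hS⟩ := hV
  have hV' : IsVariety (fun M iM => V M iM ∧ @EqId.Holds L e M iM) := by
    refine ⟨insert e S, fun M iM => ?_⟩
    constructor
    · rintro ⟨h1, h2⟩ e' he'
      rcases Set.mem_insert_iff.mp he' with rfl | h
      · exact h2
      · exact (hS M iM).mp h1 e' h
    · intro h
      exact ⟨(hS M iM).mpr fun e' he' => h e' (Set.mem_insert_of_mem _ he'),
        h e (Set.mem_insert _ _)⟩
  rcases hmin.2 _ hV' (fun M iM h => h.1) with h | h
  · haveI := hNnt
    exact absurd (h N iN ⟨hN, hNe⟩) (not_subsingleton N)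
  · exact fun M iM hM => ((h M iM).mp hM).2

end AuxLemmas

open Classical in
theorem stmt_17 {L : FirstOrder.Language.{u, u}} [L.IsAlgebraic]
    (V : ∀ M : Type u, L.Structure M → Prop) (hV : IsVariety V)
    (t : L.Term (Fin 3))
    (ht : ∀ (M : Type u) (iM : L.Structure M), V M iM → @IsSimpleAlg L M iM →
      @IsDiscrTermOn L t M iM)
    (hnf : ∀ q : QuasiId L, ∃ (k k' : ℕ) (s s' : L.Term (Fin k)) (w w' : L.Term (Fin k')),
      ∀ (M : Type u) (iM : L.Structure M), V M iM →
        (@QuasiId.Holds L q M iM ↔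
          ((∀ x : Fin k → M, @Term.realize L M iM (Fin k) x s = @Term.realize L M iM (Fin k) x s') ∨
           (∀ x : Fin k' → M,
              @Term.realize L M iM (Fin k') x w ≠ @Term.realize L M iM (Fin k') x w'))))
    (hmin : IsMinimalVariety V)
    (A : Type u) [iA : L.Structure A] (hAV : V A iA) (hAnt : Nontrivial A)
    (q : QuasiId L) (hAq : q.Holds A)
    (hBool : ∃ (X : Type u) (_ : TopologicalSpace X), CompactSpace X ∧ T2Space X ∧
      TotallyDisconnectedSpace X ∧
      ∃ (M : X → Type u) (iM : ∀ x, L.Structure (M x)),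
        (∀ x, V (M x) (iM x) ∧ (@IsSimpleAlg L (M x) (iM x) ∨ Subsingleton (M x))) ∧
        ∃ B : @FirstOrder.Language.Substructure L (∀ x, M x) (piStruct iM),
          (∀ x : X, Function.Surjective fun b : B => (b : ∀ x, M x) x) ∧
          (∀ a b : ∀ x, M x, a ∈ B → b ∈ B → IsClopen {x | a x = b x}) ∧
          (∀ N : Set X, IsClopen N → ∀ a b : ∀ x, M x, a ∈ B → b ∈ B →
            (fun x => if x ∈ N then a x else b x) ∈ B) ∧
          Nonempty (@FirstOrder.Language.Equiv L A B iA
            (@FirstOrder.Language.Substructure.inducedStructure L _ (piStruct iM) B))) :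
    ∀ (M : Type u) (iM : L.Structure M), V M iM → @QuasiId.Holds L q M iM := by
  intro M₀ iM₀ hM₀
  obtain ⟨k, k', s, s', w, w', hq⟩ := hnf q
  rcases (hq A iA hAV).mp hAq with hid | hneg
  · -- Case 1: the identity `s ≐ s'` holds in the nontrivial algebra `A`,
    -- hence (by minimality) in all of `V`.
    exact (hq M₀ iM₀ hM₀).mpr (Or.inl
      (eqid_transfer V hV hmin ⟨k, s, s'⟩ A iA hAV hAnt hid M₀ iM₀ hM₀))
  · -- Case 2: the negated equation `w ≇ w'` holds in `A`.
    obtain ⟨X, topX, hcomp, _h2, _hd, M, iM, hstalk, B, hsurj, hclop, hpatch, ⟨eqv⟩⟩ := hBool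
    letI iP : L.Structure (∀ x, M x) := piStruct iM
    letI iB : L.Structure B := Substructure.inducedStructure
    haveI := hAnt
    -- the negated equation holds in B
    have hnegB : ∀ y : Fin k' → B,
        @Term.realize L _ iB _ y w ≠ @Term.realize L _ iB _ y w' := by
      intro y h
      have hmap : ∀ u : L.Term (Fin k'), @Term.realize L _ iB _ y u
          = eqv (@Term.realize L _ iA _ (fun j => eqv.symm (y j)) u) := by
        intro u
        rw [← HomClass.realize_term (L := L) eqv (t := u) (v := fun j => eqv.symm (y j))]
        congr 1
        funext j
        exact (eqv.apply_symm_apply (y j)).symm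
      apply hneg (fun j => eqv.symm (y j))
      apply eqv.injective
      rw [← hmap w, ← hmap w']
      exact h
    obtain ⟨a0⟩ : Nonempty A := inferInstance
    set b₀ : B := eqv a0 with hb₀
    -- find a stalk on which the negated equation holds
    have hstalkneg : ∃ x₀ : X, ∀ c : Fin k' → M x₀,
        @Term.realize L _ (iM x₀) _ c w ≠ @Term.realize L _ (iM x₀) _ c w' := by
      by_contra hcon
      push_neg at hcon
      choose c hc using hcon
      have hlift : ∀ x j, ∃ b : B, (b : ∀ z, M z) x = c x j := fun x j => hsurj x (c x j)
      choose a ha using hlift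
      set N : X → Set X := fun x =>
        {y | @Term.realize L _ iP _ (fun j => (a x j : ∀ z, M z)) w y
           = @Term.realize L _ iP _ (fun j => (a x j : ∀ z, M z)) w' y} with hN
      have hrealmem : ∀ (x : X) (u : L.Term (Fin k')),
          @Term.realize L _ iP _ (fun j => (a x j : ∀ z, M z)) u ∈ B := by
        intro x u
        have h2 := HomClass.realize_term (L := L) (B.subtype) (t := u) (v := a x)
        have h3 : @Term.realize L _ iP _ (fun j => (a x j : ∀ z, M z)) u
            = B.subtype (@Term.realize L _ iB _ (a x) u) := h2
        rw [h3]
        exact (@Term.realize L _ iB _ (a x) u).2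
      have hNclop : ∀ x, IsClopen (N x) :=
        fun x => hclop _ _ (hrealmem x w) (hrealmem x w')
      have hmemNx : ∀ x, x ∈ N x := by
        intro x
        have l1 := realize_pi iM (α := Fin k') (fun j => (a x j : ∀ z, M z)) w x
        have l2 := realize_pi iM (α := Fin k') (fun j => (a x j : ∀ z, M z)) w' x
        have h3 : (fun j => (a x j : ∀ z, M z) x) = c x := funext fun j => ha x j
        have hcx : @Term.realize L _ (iM x) _ (fun j => (a x j : ∀ z, M z) x) w
            = @Term.realize L _ (iM x) _ (fun j => (a x j : ∀ z, M z) x) w' := by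
          rw [h3]; exact hc x
        exact l1.trans (hcx.trans l2.symm)
      have hcover : (Set.univ : Set X) ⊆ ⋃ x, N x :=
        fun y _ => Set.mem_iUnion.2 ⟨y, hmemNx y⟩
      obtain ⟨T, hT⟩ := isCompact_univ.elim_finite_subcover N
        (fun x => (hNclop x).2) hcover
      have hpatchT : ∀ T : Finset X, ∃ d : Fin k' → B,
          ∀ y ∈ ⋃ x ∈ T, N x,
            @Term.realize L _ (iM y) _ (fun j => (d j : ∀ z, M z) y) w
              = @Term.realize L _ (iM y) _ (fun j => (d j : ∀ z, M z) y) w' := by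
        intro T
        induction T using Finset.induction_on with
        | empty => exact ⟨fun _ => b₀, by simp⟩
        | @insert x T hx ih =>
            obtain ⟨d, hd⟩ := ih
            refine ⟨fun j => ⟨fun y => if y ∈ N x then (a x j : ∀ z, M z) y
              else (d j : ∀ z, M z) y,
              hpatch (N x) (hNclop x) _ _ (a x j).2 (d j).2⟩, ?_⟩
            intro y hy
            show @Term.realize L _ (iM y) _
                (fun j => if y ∈ N x then (a x j : ∀ z, M z) y else (d j : ∀ z, M z) y) w
              = @Term.realize L _ (iM y) _
                (fun j => if y ∈ N x then (a x j : ∀ z, M z) y else (d j : ∀ z, M z) y) w'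
            by_cases hyN : y ∈ N x
            · have h4 : (fun j => if y ∈ N x then (a x j : ∀ z, M z) y
                  else (d j : ∀ z, M z) y) = fun j => (a x j : ∀ z, M z) y :=
                funext fun j => if_pos hyN
              rw [h4]
              have l1 := realize_pi iM (α := Fin k') (fun j => (a x j : ∀ z, M z)) w y
              have l2 := realize_pi iM (α := Fin k') (fun j => (a x j : ∀ z, M z)) w' y
              have h5 : @Term.realize L _ iP _ (fun j => (a x j : ∀ z, M z)) w y
                  = @Term.realize L _ iP _ (fun j => (a x j : ∀ z, M z)) w' y := hyN
              exact l1.symm.trans (h5.trans l2)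
            · have h4 : (fun j => if y ∈ N x then (a x j : ∀ z, M z) y
                  else (d j : ∀ z, M z) y) = fun j => (d j : ∀ z, M z) y :=
                funext fun j => if_neg hyN
              rw [h4]
              refine hd y ?_
              simp only [Set.mem_iUnion] at hy ⊢
              obtain ⟨i, hi, hyi⟩ := hy
              rcases Finset.mem_insert.mp hi with rfl | hiT
              · exact absurd hyi hyN
              · exact ⟨i, hiT, hyi⟩
      obtain ⟨d, hd⟩ := hpatchT T
      apply hnegB d
      have hval : ∀ u : L.Term (Fin k'),
          ((@Term.realize L _ iB _ d u : B) : ∀ z, M z)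
            = @Term.realize L _ iP _ (fun j => (d j : ∀ z, M z)) u := by
        intro u
        exact (HomClass.realize_term (L := L) (B.subtype) (t := u) (v := d)).symm
      refine Subtype.ext ?_
      rw [hval w, hval w']
      funext y
      have l1 := realize_pi iM (α := Fin k') (fun j => (d j : ∀ z, M z)) w y
      have l2 := realize_pi iM (α := Fin k') (fun j => (d j : ∀ z, M z)) w' y
      exact l1.trans ((hd y (hT (Set.mem_univ y))).trans l2.symm)
    obtain ⟨x₀, hx₀⟩ := hstalkneg
    -- the stalk is nontrivial, hence simple, hence `t` is the discriminator on it
    have hSnt : Nontrivial (M x₀) := by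
      by_contra hns
      rw [not_nontrivial_iff_subsingleton] at hns
      exact hx₀ (fun _ => (b₀ : ∀ z, M z) x₀) (by haveI := hns; exact Subsingleton.elim _ _)
    have hSsimple : @IsSimpleAlg L (M x₀) (iM x₀) := by
      rcases (hstalk x₀).2 with h | h
      · exact h
      · haveI := hSnt
        exact absurd h (not_subsingleton (M x₀))
    have hdisc : @IsDiscrTermOn L t (M x₀) (iM x₀) := ht (M x₀) (iM x₀) (hstalk x₀).1 hSsimple
    -- a helper for realizing `t.subst ![p, q, r]`
    have hsubst3 : ∀ (M₁ : Type u) (iM₁ : L.Structure M₁) (m : ℕ)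
        (p q r : L.Term (Fin m)) (v : Fin m → M₁),
        @Term.realize L _ iM₁ _ v (t.subst ![p, q, r])
          = @Term.realize L _ iM₁ _
              ![@Term.realize L _ iM₁ _ v p, @Term.realize L _ iM₁ _ v q,
                @Term.realize L _ iM₁ _ v r] t := by
      intro M₁ iM₁ m p q r v
      letI := iM₁
      rw [Term.realize_subst]
      congr 1
      funext i
      fin_cases i <;> simp
    -- the two identities
    set W : L.Term (Fin (k' + 1)) := w.relabel Fin.castSucc with hW
    set W' : L.Term (Fin (k' + 1)) := w'.relabel Fin.castSucc with hW'
    set e₁ : EqId L := ⟨k' + 1, t.subst ![W, W', Term.var (Fin.last k')], W⟩ with he₁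
    set e₂ : EqId L := ⟨2, t.subst ![Term.var 0, Term.var 0, Term.var 1], Term.var 1⟩ with he₂
    have he₁S : @EqId.Holds L e₁ (M x₀) (iM x₀) := by
      intro v
      show @Term.realize L _ (iM x₀) _ v (t.subst ![W, W', Term.var (Fin.last k')])
        = @Term.realize L _ (iM x₀) _ v W
      rw [hsubst3]
      have h2 : @Term.realize L _ (iM x₀) _ v W
          = @Term.realize L _ (iM x₀) _ (v ∘ Fin.castSucc) w := by
        rw [hW]; exact Term.realize_relabel
      have h2' : @Term.realize L _ (iM x₀) _ v W'
          = @Term.realize L _ (iM x₀) _ (v ∘ Fin.castSucc) w' := by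
        rw [hW']; exact Term.realize_relabel
      have h3 : @Term.realize L _ (iM x₀) _ v (Term.var (Fin.last k')) = v (Fin.last k') := rfl
      rw [h2, h2', h3]
      exact (hdisc _ _ _).1 (hx₀ (v ∘ Fin.castSucc))
    have he₂S : @EqId.Holds L e₂ (M x₀) (iM x₀) := by
      intro v
      show @Term.realize L _ (iM x₀) _ v (t.subst ![Term.var 0, Term.var 0, Term.var 1])
        = @Term.realize L _ (iM x₀) _ v (Term.var 1)
      rw [hsubst3]
      exact (hdisc (v 0) (v 0) (v 1)).2 rfl
    have he₁V := eqid_transfer V hV hmin e₁ (M x₀) (iM x₀) (hstalk x₀).1 hSnt he₁S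
    have he₂V := eqid_transfer V hV hmin e₂ (M x₀) (iM x₀) (hstalk x₀).1 hSnt he₂S
    -- conclude for M₀
    by_cases hsol : ∃ c : Fin k' → M₀,
        @Term.realize L _ iM₀ _ c w = @Term.realize L _ iM₀ _ c w'
    · obtain ⟨c, hc⟩ := hsol
      have hall : ∀ u : M₀, u = @Term.realize L _ iM₀ _ c w := by
        intro u
        have h1 := he₁V M₀ iM₀ hM₀ (Fin.snoc c u)
        rw [hsubst3] at h1
        have hcomp : (Fin.snoc c u ∘ Fin.castSucc : Fin k' → M₀) = c := by
          funext j; simp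
        have h2 : @Term.realize L _ iM₀ _ (Fin.snoc c u) W
            = @Term.realize L _ iM₀ _ c w := by
          rw [hW, Term.realize_relabel, hcomp]
        have h2' : @Term.realize L _ iM₀ _ (Fin.snoc c u) W'
            = @Term.realize L _ iM₀ _ c w' := by
          rw [hW', Term.realize_relabel, hcomp]
        have h3 : @Term.realize L _ iM₀ _ (Fin.snoc c u) (Term.var (Fin.last k')) = u := by
          simp
        rw [h2, h2', h3, ← hc] at h1
        have h4 := he₂V M₀ iM₀ hM₀ ![@Term.realize L _ iM₀ _ c w, u]
        rw [hsubst3] at h4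
        simp only [Term.realize_var, Matrix.cons_val_zero, Matrix.cons_val_one,
          Matrix.head_cons] at h4
        exact h4.symm.trans h1
      intro x _
      rw [hall (@Term.realize L _ iM₀ _ x q.cl), hall (@Term.realize L _ iM₀ _ x q.cr)]
    · push_neg at hsol
      exact (hq M₀ iM₀ hM₀).mpr (Or.inr hsol)
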